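/- Suppose dim(h_i) = n ≥ 2 and vertex i is ρ̃-recurrent for some density ρ̃. Then there exists a non-faithful density ρ on h_i such that i is ρ-recurrent; moreover ρ can be taken to be a pure state |u⟩⟨u|. -/

import Mathlib

/-!
Every density is a finite sum of rank-one terms `|v⟩⟨v|`, and `p_{ii;ρ}(t)` is real-linear
in `ρ`; since the Lebesgue integral is subadditive, `∫ p_{ii;σ} = ∞` forces
`∫ p_{ii;|v⟩⟨v|} = ∞` for one of the terms. Normalizing `v` only rescales the integrand by a
positive constant, and a rank-one state is never faithful once `dim h_i ≥ 2`.
-/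

open Matrix MeasureTheory ComplexOrder

/-- Embedding of an internal-state operator `ρ` at site `i` of the direct sum
`H = ⊕_{i ∈ V} h_i` (semifinite CTOQW with `h_i = ℂ^d`): this is `ρ ⊗ |i⟩⟨i|`. -/
def siteEmbed {V : Type*} [DecidableEq V] {d : ℕ} (i : V)
    (ρ : Matrix (Fin d) (Fin d) ℂ) : Matrix (V × Fin d) (V × Fin d) ℂ :=
  fun a b => if a.1 = i ∧ b.1 = i then ρ a.2 b.2 else 0

/-- The projection `P_k = I ⊗ |k⟩⟨k|` onto the block of site `k`. -/
def siteProj {V : Type*} [DecidableEq V] (d : ℕ) (k : V) :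
    Matrix (V × Fin d) (V × Fin d) ℂ :=
  Matrix.diagonal fun x => if x.1 = k then 1 else 0

/-- The `k`-th diagonal block of an operator on `⊕_{i ∈ V} ℂ^d`. -/
def siteBlock {V : Type*} {d : ℕ} (k : V) (X : Matrix (V × Fin d) (V × Fin d) ℂ) :
    Matrix (Fin d) (Fin d) ℂ :=
  fun x y => X (k, x) (k, y)

/-- Transition probability `p_{ji;ρ}(t) = Tr(e^{tL}(ρ ⊗ |i⟩⟨i|)(I ⊗ |j⟩⟨j|))` of a CTOQW
whose semigroup `e^{tL}` is given by `T`. -/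
noncomputable def transP {V : Type*} [Fintype V] [DecidableEq V] {d : ℕ}
    (T : ℝ → Matrix (V × Fin d) (V × Fin d) ℂ →ₗ[ℂ] Matrix (V × Fin d) (V × Fin d) ℂ)
    (j i : V) (ρ : Matrix (Fin d) (Fin d) ℂ) (t : ℝ) : ℝ :=
  ((T t (siteEmbed i ρ) * siteProj d j).trace).re

section PureState

variable {𝕜 n : Type*} [RCLike 𝕜] [Fintype n]

theorem Matrix.exists_vecMulVec_self_star_eq_smul_of_ne_zero {v : n → 𝕜} (hv : v ≠ 0) :
    ∃ (c : ℝ) (u : n → 𝕜), 0 < c ∧ u ⬝ᵥ star u = 1 ∧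
      vecMulVec v (star v) = c • vecMulVec u (star u) := by
  obtain ⟨c, hc, hcv⟩ := RCLike.pos_iff_exists_ofReal.mp (dotProduct_self_star_pos_iff.mpr hv)
  have hc0 : (c : 𝕜) ≠ 0 := RCLike.ofReal_ne_zero.mpr hc.ne'
  set a : 𝕜 := (√c : 𝕜)⁻¹
  have ha_star : star a = a := by simp [a, RCLike.star_def]
  have ha_sq : a * a = (c : 𝕜)⁻¹ := by
    rw [← mul_inv, ← RCLike.ofReal_mul, Real.mul_self_sqrt hc.le]
  refine ⟨c, a • v, hc, ?_, ?_⟩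
  · rw [star_smul, smul_dotProduct, dotProduct_smul, smul_eq_mul, smul_eq_mul, ha_star,
      ← mul_assoc, ha_sq, ← hcv, inv_mul_cancel₀ hc0]
  · rw [RCLike.real_smul_eq_coe_smul (K := 𝕜), star_smul, smul_vecMulVec, vecMulVec_smul,
      smul_smul, smul_smul, ha_star, mul_assoc, ha_sq, mul_inv_cancel₀ hc0, one_smul]

theorem Matrix.trace_vecMulVec_self_star_eq_one {u : n → 𝕜} (hu : u ⬝ᵥ star u = 1) :
    (vecMulVec u (star u)).trace = 1 := by
  rw [trace_vecMulVec, hu]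

theorem Matrix.not_posDef_vecMulVec [DecidableEq n] [Nontrivial n] (u v : n → 𝕜) :
    ¬ (vecMulVec u v).PosDef := fun h => h.det_pos.ne' (det_vecMulVec u v)

end PureState

namespace MeasureTheory

variable {α : Type*} [MeasurableSpace α] {μ : Measure α}

theorem lintegral_ofReal_const_mul {c : ℝ} (hc : 0 ≤ c) (f : α → ℝ) :
    ∫⁻ x, ENNReal.ofReal (c * f x) ∂μ = ENNReal.ofReal c * ∫⁻ x, ENNReal.ofReal (f x) ∂μ := by
  simp_rw [ENNReal.ofReal_mul hc]
  exact lintegral_const_mul' _ _ ENNReal.ofReal_ne_top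

theorem exists_lintegral_ofReal_eq_top_of_sum {ι : Type*} {s : Finset ι} {f : ι → α → ℝ}
    (hf : ∀ k ∈ s, AEMeasurable (f k) μ)
    (h : ∫⁻ x, ENNReal.ofReal (∑ k ∈ s, f k x) ∂μ = ⊤) :
    ∃ k ∈ s, ∫⁻ x, ENNReal.ofReal (f k x) ∂μ = ⊤ := by
  by_contra! hfin
  refine h.not_lt (lt_of_le_of_lt ?_ (ENNReal.sum_lt_top.mpr fun k hk => (hfin k hk).lt_top))
  calc ∫⁻ x, ENNReal.ofReal (∑ k ∈ s, f k x) ∂μ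
      ≤ ∫⁻ x, ∑ k ∈ s, ENNReal.ofReal (f k x) ∂μ :=
        lintegral_mono fun x => Finset.le_sum_of_subadditive _ ENNReal.ofReal_zero.le
          (fun _ _ => ENNReal.ofReal_add_le) _ _
    _ = ∑ k ∈ s, ∫⁻ x, ENNReal.ofReal (f k x) ∂μ :=
        lintegral_finsetSum' s fun k hk => (hf k hk).ennreal_ofReal

end MeasureTheory

section Recurrence

variable {V : Type*} [DecidableEq V] {d : ℕ}

theorem siteEmbed_smul (i : V) (c : ℂ) (ρ : Matrix (Fin d) (Fin d) ℂ) :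
    siteEmbed i (c • ρ) = c • siteEmbed i ρ := by
  ext a b
  by_cases h : a.1 = i ∧ b.1 = i <;> simp [siteEmbed, h]

theorem siteEmbed_sum (i : V) {ι : Type*} (s : Finset ι) (ρ : ι → Matrix (Fin d) (Fin d) ℂ) :
    siteEmbed i (∑ k ∈ s, ρ k) = ∑ k ∈ s, siteEmbed i (ρ k) := by
  ext a b
  by_cases h : a.1 = i ∧ b.1 = i <;> simp [siteEmbed, h, Matrix.sum_apply]

variable [Fintype V]
  {T : ℝ → Matrix (V × Fin d) (V × Fin d) ℂ →ₗ[ℂ] Matrix (V × Fin d) (V × Fin d) ℂ}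

theorem transP_real_smul (j i : V) (c : ℝ) (ρ : Matrix (Fin d) (Fin d) ℂ) (t : ℝ) :
    transP T j i (c • ρ) t = c * transP T j i ρ t := by
  rw [← Complex.coe_smul]
  simp only [transP, siteEmbed_smul, map_smul, Matrix.smul_mul, Matrix.trace_smul, smul_eq_mul,
    Complex.re_ofReal_mul]

theorem transP_sum (j i : V) {ι : Type*} (s : Finset ι) (ρ : ι → Matrix (Fin d) (Fin d) ℂ)
    (t : ℝ) : transP T j i (∑ k ∈ s, ρ k) t = ∑ k ∈ s, transP T j i (ρ k) t := by
  simp only [transP, siteEmbed_sum, map_sum, Matrix.sum_mul, Matrix.trace_sum, Complex.re_sum]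

theorem transP_zero (j i : V) (t : ℝ) : transP T j i 0 t = 0 := by
  simpa using transP_real_smul (T := T) j i 0 0 t

theorem continuous_transP (hT : ∀ X, Continuous fun t => T t X) (j i : V)
    (ρ : Matrix (Fin d) (Fin d) ℂ) : Continuous (transP T j i ρ) :=
  Complex.continuous_re.comp ((hT _).matrix_mul continuous_const).matrix_trace

variable (T) in
def IsRecurrent (i : V) (ρ : Matrix (Fin d) (Fin d) ℂ) : Prop :=
  ∫⁻ t in Set.Ici (0 : ℝ), ENNReal.ofReal (transP T i i ρ t) = ⊤

theorem IsRecurrent.ne_zero {i : V} {ρ : Matrix (Fin d) (Fin d) ℂ} (h : IsRecurrent T i ρ) :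
    ρ ≠ 0 := by
  rintro rfl
  simp [IsRecurrent, transP_zero] at h

theorem isRecurrent_real_smul_iff {i : V} {ρ : Matrix (Fin d) (Fin d) ℂ} {c : ℝ} (hc : 0 < c) :
    IsRecurrent T i (c • ρ) ↔ IsRecurrent T i ρ := by
  rw [IsRecurrent, IsRecurrent]
  simp_rw [transP_real_smul]
  rw [lintegral_ofReal_const_mul hc.le]
  simp [ENNReal.mul_eq_top, hc]

theorem IsRecurrent.exists_of_sum (hT : ∀ X, Continuous fun t => T t X) {i : V} {ι : Type*}
    {s : Finset ι} {ρ : ι → Matrix (Fin d) (Fin d) ℂ} (h : IsRecurrent T i (∑ k ∈ s, ρ k)) :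
    ∃ k ∈ s, IsRecurrent T i (ρ k) := by
  unfold IsRecurrent at h
  simp_rw [transP_sum] at h
  exact exists_lintegral_ofReal_eq_top_of_sum
    (fun k _ => (continuous_transP hT i i (ρ k)).aemeasurable) h

end Recurrence

theorem ctoqw_exists_pure_nonfaithful_recurrent_general {V : Type*} [Fintype V] [DecidableEq V]
    {d : ℕ} (hd : 2 ≤ d)
    (T : ℝ → Matrix (V × Fin d) (V × Fin d) ℂ →ₗ[ℂ] Matrix (V × Fin d) (V × Fin d) ℂ)
    (hTcont : ∀ X, Continuous fun t => T t X)
    (i : V) (σ : Matrix (Fin d) (Fin d) ℂ) (hσ : σ.PosSemidef)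
    (hrec : (∫⁻ t in Set.Ici (0 : ℝ), ENNReal.ofReal (transP T i i σ t)) = ⊤) :
    ∃ ρ : Matrix (Fin d) (Fin d) ℂ,
      ρ.PosSemidef ∧ ρ.trace = 1 ∧ ¬ ρ.PosDef ∧ (∃ u : Fin d → ℂ, ρ = vecMulVec u (star u)) ∧
        (∫⁻ t in Set.Ici (0 : ℝ), ENNReal.ofReal (transP T i i ρ t)) = ⊤ := by
  have : Nontrivial (Fin d) := Fin.nontrivial_iff_two_le.mpr hd
  obtain ⟨m, v, rfl⟩ := posSemidef_iff_eq_sum_vecMulVec.mp hσ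
  obtain ⟨k, -, hk⟩ := IsRecurrent.exists_of_sum hTcont hrec
  obtain ⟨c, u, hc, hu, hvu⟩ :=
    exists_vecMulVec_self_star_eq_smul_of_ne_zero (v := v k) fun hv => hk.ne_zero (by simp [hv])
  rw [hvu, isRecurrent_real_smul_iff hc] at hk
  exact ⟨vecMulVec u (star u), posSemidef_vecMulVec_self_star u,
    trace_vecMulVec_self_star_eq_one hu, not_posDef_vecMulVec u (star u), ⟨u, rfl⟩, hk⟩

/-- If `dim h_i = d ≥ 2` and the vertex `i` is recurrent for some density, then there is a
non-faithful density `ρ` — which may moreover be taken pure, `ρ = |u⟩⟨u|` — for which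
`i` is `ρ`-recurrent. -/
theorem ctoqw_exists_pure_nonfaithful_recurrent {V : Type*} [Fintype V] [DecidableEq V]
    {d : ℕ} (hd : 2 ≤ d)
    (T : ℝ → Matrix (V × Fin d) (V × Fin d) ℂ →ₗ[ℂ] Matrix (V × Fin d) (V × Fin d) ℂ)
    (hT0 : T 0 = LinearMap.id)
    (hTsemi : ∀ s t : ℝ, 0 ≤ s → 0 ≤ t → T (s + t) = (T s).comp (T t))
    (hTpos : ∀ t : ℝ, 0 ≤ t → ∀ X, X.PosSemidef → (T t X).PosSemidef)
    (hTtr : ∀ t : ℝ, 0 ≤ t → ∀ X, (T t X).trace = X.trace)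
    (hTcont : ∀ X, Continuous fun t => T t X)
    (i : V) (σ : Matrix (Fin d) (Fin d) ℂ) (hσ : σ.PosSemidef) (hσ1 : σ.trace = 1)
    (hrec : (∫⁻ t in Set.Ici (0 : ℝ), ENNReal.ofReal (transP T i i σ t)) = ⊤) :
    ∃ ρ : Matrix (Fin d) (Fin d) ℂ,
      ρ.PosSemidef ∧ ρ.trace = 1 ∧ ¬ ρ.PosDef ∧ (∃ u : Fin d → ℂ, ρ = vecMulVec u (star u)) ∧
        (∫⁻ t in Set.Ici (0 : ℝ), ENNReal.ofReal (transP T i i ρ t)) = ⊤ :=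
  ctoqw_exists_pure_nonfaithful_recurrent_general hd T hTcont i σ hσ hrec
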